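/- arXiv:2409.07007 — 2 statements merged into one kernel-verified Lean document; each statement's English description precedes it below -/
import Mathlib

section
/- Let A ∈ ℂ^{m×n×p}, W ∈ ℂ^{n×m×p}, rank_M(A) = rp, rank_M(W) = sp with sp ≤ rp. Suppose W *_M P = Q *_M R where: P ∈ ℂ^{m×m×p} satisfies P *_M P^* = I_M = P^* *_M P; Q ∈ ℂ^{n×n×p} satisfies Q *_M Q^* = I_M = Q^* *_M Q; R ∈ ℂ^{n×m×p} has rank_M(R) = sp and its horizontal slices s+1,…,n vanish. Let Q̃ = Q(:,1:s,:) ∈ ℂ^{n×s×p} be the first s lateral slices of Q and R̃ = R(1:s,:,:) ∈ ℂ^{s×m×p} the first s horizontal slices of R, and suppose rank_M(R̃) = sp. If there exists an outer inverse X of A with R_M(X) = R_M(W) and N_M(X) = N_M(W), then the tensor R̃ *_M P^* *_M A *_M Q̃ ∈ ℂ^{s×s×p} is invertible and X = Q̃ *_M (R̃ *_M P^* *_M A *_M Q̃)^{-1} *_M R̃ *_M P^*. -/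
/-
Under `mat`, the M-product becomes matrix multiplication, so everything reduces to matrices:
`mat W = Q̃ S` with `Q̃ = mat (Q(:,1:s,:))` an isometry and `S = mat (R̃) mat (P)^*` of full
row rank. An outer inverse `X` with the range and kernel of `Q̃ S` factors as `X = Q̃ U S` (the
range gives the left factor, the kernel the right one). Then `X A X = X` gives
`U (S A Q̃) U = U`, while `range (Q̃ S) ⊆ range X` makes `U` right invertible, so
`U = (S A Q̃)⁻¹`. Finally `mat` of a tensor is block diagonal, hence so is its inverse, which is
therefore again `mat Y` for a tensor `Y`.
-/

open Matrix Finset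

/-- A third-order tensor in `ℂ^{m×n×p}`, given by its `p` frontal slices. -/
abbrev Tensor (m n p : ℕ) := Fin p → Matrix (Fin m) (Fin n) ℂ

/-- The transform `Â = A ×₃ M` (mode-3 product with `M`). -/
noncomputable def hatT {m n p : ℕ} (M : Matrix (Fin p) (Fin p) ℂ) (A : Tensor m n p) :
    Tensor m n p :=
  fun l => ∑ s, M l s • A s

/-- `mat(A)`: the block-diagonal matrix whose blocks are frontal slices of `A ×₃ M`. -/
noncomputable def matT {m n p : ℕ} (M : Matrix (Fin p) (Fin p) ℂ) (A : Tensor m n p) :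
    Matrix (Fin m × Fin p) (Fin n × Fin p) ℂ :=
  Matrix.blockDiagonal (hatT M A)

/-- The M-product `A *_M B`, determined by `mat(A *_M B) = mat(A)·mat(B)`. -/
noncomputable def mprod {m n k p : ℕ} (M : Matrix (Fin p) (Fin p) ℂ)
    (A : Tensor m n p) (B : Tensor n k p) : Tensor m k p :=
  fun l => ∑ s, M⁻¹ l s • (hatT M A s * hatT M B s)

/-- The conjugate transpose `A^*`, determined by `mat(A^*) = mat(A)^*`. -/
noncomputable def mstar {m n p : ℕ} (M : Matrix (Fin p) (Fin p) ℂ) (A : Tensor m n p) :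
    Tensor n m p :=
  fun l => ∑ s, M⁻¹ l s • (hatT M A s)ᴴ

/-- The identity tensor `I_M ∈ ℂ^{m×m×p}`, determined by `mat(I_M) = I`. -/
noncomputable def idT {p : ℕ} (M : Matrix (Fin p) (Fin p) ℂ) (m : ℕ) : Tensor m m p :=
  fun l => ∑ s, M⁻¹ l s • (1 : Matrix (Fin m) (Fin m) ℂ)

/-- M-product powers of a square tensor. -/
noncomputable def mpow {m p : ℕ} (M : Matrix (Fin p) (Fin p) ℂ) (A : Tensor m m p) :
    ℕ → Tensor m m p
  | 0 => idT M m
  | k + 1 => mprod M A (mpow M A k)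

/-- `R_M(A)`: the column space of `mat(A)`. -/
noncomputable def rangeM {m n p : ℕ} (M : Matrix (Fin p) (Fin p) ℂ) (A : Tensor m n p) :
    Submodule ℂ (Fin m × Fin p → ℂ) :=
  LinearMap.range (matT M A).mulVecLin

/-- `N_M(A)`: the kernel of `mat(A)`. -/
noncomputable def kerM {m n p : ℕ} (M : Matrix (Fin p) (Fin p) ℂ) (A : Tensor m n p) :
    Submodule ℂ (Fin n × Fin p → ℂ) :=
  LinearMap.ker (matT M A).mulVecLin

/-- `rank_M(A) = rank(mat(A))`. -/
noncomputable def rankM {m n p : ℕ} (M : Matrix (Fin p) (Fin p) ℂ) (A : Tensor m n p) : ℕ :=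
  (matT M A).rank

/-- The first `s` lateral slices `Q(:,1:s,:)`. -/
def latSlice {n s p : ℕ} (hsn : s ≤ n) (Q : Tensor n n p) : Tensor n s p :=
  fun l => (Q l).submatrix id (Fin.castLE hsn)

/-- The first `s` horizontal slices `R(1:s,:,:)`. -/
def horSlice {n m s p : ℕ} (hsn : s ≤ n) (R : Tensor n m p) : Tensor s m p :=
  fun l => (R l).submatrix (Fin.castLE hsn) id

/-- Frobenius norm of a complex matrix. -/
noncomputable def frobNorm {α β : Type*} [Fintype α] [Fintype β] (X : Matrix α β ℂ) : ℝ :=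
  Real.sqrt (∑ i, ∑ j, ‖X i j‖ ^ 2)

namespace Matrix

variable {ι κ σ τ : Type*}

section CommRing

variable {R : Type*} [CommRing R]

theorem exists_mul_eq_of_range_le [Fintype κ] [Fintype τ] [DecidableEq τ] {A : Matrix ι κ R}
    {B : Matrix ι τ R} (h : LinearMap.range B.mulVecLin ≤ LinearMap.range A.mulVecLin) :
    ∃ K : Matrix κ τ R, A * K = B := by
  have hcol : ∀ j, ∃ v, A *ᵥ v = B.col j := fun j =>
    h ⟨Pi.single j 1, mulVec_single_one B j⟩
  choose v hv using hcol
  refine ⟨(of v)ᵀ, ext fun i j => ?_⟩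
  simpa [mul_apply, mulVec, dotProduct] using congrFun (hv j) i

theorem mul_mul_eq_self_of_ker_le [Fintype ι] [Fintype σ] [DecidableEq σ] {S : Matrix σ ι R}
    {C : Matrix ι σ R} (hC : S * C = 1) {X : Matrix κ ι R}
    (h : LinearMap.ker S.mulVecLin ≤ LinearMap.ker X.mulVecLin) : X * C * S = X := by
  refine ext_iff_mulVec.mpr fun v => ?_
  have hker : S *ᵥ (v - (C * S) *ᵥ v) = 0 := by
    rw [mulVec_sub, mulVec_mulVec, ← Matrix.mul_assoc, hC, Matrix.one_mul, sub_self]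
  have hX : X *ᵥ (v - (C * S) *ᵥ v) = 0 := h hker
  rw [mulVec_sub, sub_eq_zero] at hX
  rw [Matrix.mul_assoc, ← mulVec_mulVec, hX]

theorem isUnit_and_eq_mul_inv_mul_of_outer_inverse [Fintype ι] [Fintype κ] [Fintype σ]
    [DecidableEq ι] [DecidableEq σ] {A : Matrix ι κ R} {X : Matrix κ ι R}
    {Q : Matrix κ σ R} {L : Matrix σ κ R} {S : Matrix σ ι R} {C : Matrix ι σ R}
    (hL : L * Q = 1) (hC : S * C = 1) (hout : X * A * X = X)
    (hR : LinearMap.range X.mulVecLin = LinearMap.range (Q * S).mulVecLin)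
    (hN : LinearMap.ker X.mulVecLin = LinearMap.ker (Q * S).mulVecLin) :
    IsUnit (S * A * Q) ∧ X = Q * (S * A * Q)⁻¹ * S := by
  obtain ⟨K, hK⟩ := exists_mul_eq_of_range_le hR.le
  have hXQ : Q * (L * X) = X := by
    rw [← hK, Matrix.mul_assoc Q, ← Matrix.mul_assoc L, hL, Matrix.one_mul]
  have hXC : X * C * S = X := mul_mul_eq_self_of_ker_le hC <| hN ▸ fun v (hv : S *ᵥ v = 0) =>
    show (Q * S) *ᵥ v = 0 by rw [← mulVec_mulVec, hv, mulVec_zero]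
  set U := L * X * C
  have hX : X = Q * U * S := by
    calc X = Q * (L * (X * C * S)) := by rw [hXC, hXQ]
      _ = Q * U * S := by simp only [U, Matrix.mul_assoc]
  obtain ⟨K', hK'⟩ := exists_mul_eq_of_range_le hR.ge
  have hUV : U * (S * K' * C) = 1 := by
    have hS : S = U * S * K' := by
      calc S = L * (X * K') := by rw [hK', ← Matrix.mul_assoc, hL, Matrix.one_mul]
        _ = U * S * K' := by
          rw [hX]
          simp only [← Matrix.mul_assoc, hL, Matrix.one_mul]
    rw [← Matrix.mul_assoc, ← Matrix.mul_assoc, ← hS, hC]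
  set B := S * A * Q
  have hUBU : U * B * U = U := by
    have hQS : Q * (U * B * U) * S = X := by
      calc Q * (U * B * U) * S = Q * U * S * A * (Q * U * S) := by
            simp only [B, Matrix.mul_assoc]
        _ = X := by rw [← hX, hout]
    calc U * B * U = L * (Q * (U * B * U) * S) * C := by
          simp only [Matrix.mul_assoc, hC, Matrix.mul_one]
          rw [← Matrix.mul_assoc L Q, hL, Matrix.one_mul]
      _ = U := by rw [hQS]
  have hUB : U * B = 1 := by
    calc U * B = U * B * U * (S * K' * C) := by
          rw [Matrix.mul_assoc (U * B), hUV, Matrix.mul_one]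
      _ = 1 := by rw [hUBU, hUV]
  refine ⟨⟨⟨B, U, mul_eq_one_comm.mp hUB, hUB⟩, rfl⟩, ?_⟩
  rw [inv_eq_left_inv hUB, hX]

end CommRing

theorem exists_mul_eq_one_of_rank_eq_card {K : Type*} [Field K] [Fintype ι] [Fintype σ]
    [DecidableEq σ] (S : Matrix σ ι K) (hS : S.rank = Fintype.card σ) :
    ∃ C : Matrix ι σ K, S * C = 1 := by
  have htop : LinearMap.range S.mulVecLin = ⊤ :=
    Submodule.eq_top_of_finrank_eq (by rwa [Module.finrank_fintype_fun_eq_card])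
  exact exists_mul_eq_of_range_le (htop ▸ le_top)

variable {α : Type*}

theorem submatrix_id_conjTranspose_mul_self [Fintype ι] [NonUnitalSemiring α] [StarRing α]
    (A : Matrix ι κ α) (f : σ → κ) :
    (A.submatrix id f)ᴴ * A.submatrix id f = (Aᴴ * A).submatrix f f := by
  rw [conjTranspose_submatrix, submatrix_mul _ _ _ _ _ Function.bijective_id]

theorem mul_eq_submatrix_mul_submatrix [Fintype κ] [Fintype σ] [NonUnitalNonAssocSemiring α]
    {A : Matrix ι κ α} {B : Matrix κ τ α} {f : σ → κ} (hf : Function.Injective f)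
    (hB : ∀ k ∉ Set.range f, ∀ j, B k j = 0) :
    A * B = A.submatrix id f * B.submatrix f id :=
  ext fun _ j => (Fintype.sum_of_injective f hf _ _
    (fun k hk => mul_eq_zero_of_right _ (hB k hk j)) fun _ => rfl).symm

end Matrix

section Transform

variable {m n k p : ℕ}

theorem hatT_hatT (N N' : Matrix (Fin p) (Fin p) ℂ) (A : Tensor m n p) :
    hatT N (hatT N' A) = hatT (N * N') A := by
  funext l
  simp only [hatT, smul_sum, smul_smul, mul_apply, sum_smul]
  exact sum_comm

theorem hatT_one (A : Tensor m n p) : hatT 1 A = A := by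
  funext l
  simp [hatT, one_apply, ite_smul]

variable {M : Matrix (Fin p) (Fin p) ℂ}

theorem hatT_hatT_inv (hM : IsUnit M.det) (A : Tensor m n p) : hatT M (hatT M⁻¹ A) = A := by
  rw [hatT_hatT, mul_nonsing_inv _ hM, hatT_one]

theorem hatT_inv_hatT (hM : IsUnit M.det) (A : Tensor m n p) : hatT M⁻¹ (hatT M A) = A := by
  rw [hatT_hatT, nonsing_inv_mul _ hM, hatT_one]

theorem matT_injective (hM : IsUnit M.det) : Function.Injective (matT M : Tensor m n p → _) := by
  intro A B h
  rw [← hatT_inv_hatT hM A, ← hatT_inv_hatT hM B, blockDiagonal_injective h]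

theorem matT_mprod (hM : IsUnit M.det) (A : Tensor m n p) (B : Tensor n k p) :
    matT M (mprod M A B) = matT M A * matT M B := by
  change blockDiagonal (hatT M (hatT M⁻¹ fun l => hatT M A l * hatT M B l)) = _
  rw [hatT_hatT_inv hM, blockDiagonal_mul]
  rfl

theorem matT_mstar (hM : IsUnit M.det) (A : Tensor m n p) :
    matT M (mstar M A) = (matT M A)ᴴ := by
  change blockDiagonal (hatT M (hatT M⁻¹ fun l => (hatT M A l)ᴴ)) = _
  rw [hatT_hatT_inv hM, matT, blockDiagonal_conjTranspose]

theorem matT_idT (hM : IsUnit M.det) : matT M (idT M m) = 1 := by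
  change blockDiagonal (hatT M (hatT M⁻¹ fun _ => 1)) = _
  rw [hatT_hatT_inv hM]
  exact blockDiagonal_one

theorem exists_matT_eq_inv (hM : IsUnit M.det) (B : Tensor m m p) (hB : IsUnit (matT M B)) :
    ∃ Y : Tensor m m p, matT M Y = (matT M B)⁻¹ := by
  have hblocks : ∀ l, IsUnit (hatT M B l).det := by
    have hdet := (isUnit_iff_isUnit_det _).mp hB
    simp only [matT, det_blockDiagonal, isUnit_iff_ne_zero, prod_ne_zero_iff, mem_univ,
      true_implies] at hdet
    exact fun l => isUnit_iff_ne_zero.mpr (hdet l)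
  refine ⟨hatT M⁻¹ fun l => (hatT M B l)⁻¹, (inv_eq_left_inv ?_).symm⟩
  rw [matT, matT, hatT_hatT_inv hM, ← blockDiagonal_mul]
  simp only [nonsing_inv_mul _ (hblocks _)]
  exact blockDiagonal_one

end Transform

section Slices

variable {m n s p : ℕ} {M : Matrix (Fin p) (Fin p) ℂ}

theorem matT_latSlice (hsn : s ≤ n) (Q : Tensor n n p) :
    matT M (latSlice hsn Q) = (matT M Q).submatrix id (Prod.map (Fin.castLE hsn) id) := by
  ext ⟨i, l⟩ ⟨j, t⟩
  simp [matT, hatT, latSlice, blockDiagonal_apply, Matrix.sum_apply]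

theorem matT_horSlice (hsn : s ≤ n) (R : Tensor n m p) :
    matT M (horSlice hsn R) = (matT M R).submatrix (Prod.map (Fin.castLE hsn) id) id := by
  ext ⟨i, l⟩ ⟨j, t⟩
  simp [matT, hatT, horSlice, blockDiagonal_apply, Matrix.sum_apply]

theorem conjTranspose_mul_self_matT_latSlice (hM : IsUnit M.det) (hsn : s ≤ n)
    {Q : Tensor n n p} (hQ : mprod M (mstar M Q) Q = idT M n) :
    (matT M (latSlice hsn Q))ᴴ * matT M (latSlice hsn Q) = 1 := by
  rw [matT_latSlice, submatrix_id_conjTranspose_mul_self, ← matT_mstar hM, ← matT_mprod hM, hQ,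
    matT_idT hM, submatrix_one _ ((Fin.castLE_injective hsn).prodMap Function.injective_id)]

theorem matT_mul_eq_latSlice_mul_horSlice (hsn : s ≤ n) (Q : Tensor n n p) (R : Tensor n m p)
    (hR : ∀ l (i : Fin n), s ≤ (i : ℕ) → ∀ j, R l i j = 0) :
    matT M Q * matT M R = matT M (latSlice hsn Q) * matT M (horSlice hsn R) := by
  rw [matT_latSlice, matT_horSlice]
  refine mul_eq_submatrix_mul_submatrix
    ((Fin.castLE_injective hsn).prodMap Function.injective_id) ?_
  rintro ⟨i, l⟩ hi ⟨j, t⟩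
  have hsi : s ≤ (i : ℕ) := by
    by_contra! h
    exact hi ⟨(⟨i, h⟩, l), rfl⟩
  simp [matT, hatT, blockDiagonal_apply, Matrix.sum_apply, hR _ i hsi]

theorem matT_eq_latSlice_mul_horSlice_mul_conjTranspose (hM : IsUnit M.det) (hsn : s ≤ n)
    {W : Tensor n m p} {P : Tensor m m p} {Q : Tensor n n p} {R : Tensor n m p}
    (hQR : mprod M W P = mprod M Q R) (hP : mprod M P (mstar M P) = idT M m)
    (hR : ∀ l (i : Fin n), s ≤ (i : ℕ) → ∀ j, R l i j = 0) :
    matT M W = matT M (latSlice hsn Q) * (matT M (horSlice hsn R) * (matT M P)ᴴ) := by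
  calc matT M W = matT M W * (matT M P * (matT M P)ᴴ) := by
        rw [← matT_mstar hM, ← matT_mprod hM, hP, matT_idT hM, Matrix.mul_one]
    _ = matT M Q * matT M R * (matT M P)ᴴ := by
        rw [← Matrix.mul_assoc, ← matT_mprod hM, hQR, matT_mprod hM]
    _ = _ := by rw [matT_mul_eq_latSlice_mul_horSlice hsn Q R hR, Matrix.mul_assoc]

end Slices

theorem exists_matT_mul_conjTranspose_mul_eq_one {m s p : ℕ} {M : Matrix (Fin p) (Fin p) ℂ}
    (hM : IsUnit M.det) {T : Tensor s m p} {P : Tensor m m p}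
    (hP : mprod M (mstar M P) P = idT M m) (hT : rankM M T = s * p) :
    ∃ C : Matrix (Fin m × Fin p) (Fin s × Fin p) ℂ, matT M T * (matT M P)ᴴ * C = 1 := by
  obtain ⟨C, hC⟩ := exists_mul_eq_one_of_rank_eq_card (matT M T)
    (by rw [Fintype.card_prod, Fintype.card_fin, Fintype.card_fin]; exact hT)
  refine ⟨matT M P * C, ?_⟩
  rw [Matrix.mul_assoc, ← Matrix.mul_assoc _ (matT M P), ← matT_mstar hM, ← matT_mprod hM, hP,
    matT_idT hM, Matrix.one_mul, hC]

theorem outer_inverse_MQR_general {m n p s : ℕ} (hsn : s ≤ n)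
    (M : Matrix (Fin p) (Fin p) ℂ) (hM : IsUnit M.det)
    (A : Tensor m n p) (W : Tensor n m p)
    (P : Tensor m m p) (Q : Tensor n n p) (R : Tensor n m p)
    (hQR : mprod M W P = mprod M Q R)
    (hP1 : mprod M P (mstar M P) = idT M m) (hP2 : mprod M (mstar M P) P = idT M m)
    (hQ2 : mprod M (mstar M Q) Q = idT M n)
    (hRvanish : ∀ l (i : Fin n), s ≤ (i : ℕ) → ∀ j, R l i j = 0)
    (hrRt : rankM M (horSlice hsn R) = s * p)
    (X : Tensor n m p)
    (hout : mprod M X (mprod M A X) = X)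
    (hRX : rangeM M X = rangeM M W) (hNX : kerM M X = kerM M W) :
    ∃ Y : Tensor s s p,
      mprod M (mprod M (horSlice hsn R) (mprod M (mstar M P) (mprod M A (latSlice hsn Q)))) Y
        = idT M s ∧
      mprod M Y (mprod M (horSlice hsn R) (mprod M (mstar M P) (mprod M A (latSlice hsn Q))))
        = idT M s ∧
      X = mprod M (latSlice hsn Q) (mprod M Y (mprod M (horSlice hsn R) (mstar M P))) := by
  set Qt := matT M (latSlice hsn Q)
  set S := matT M (horSlice hsn R) * (matT M P)ᴴ
  have hW : matT M W = Qt * S :=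
    matT_eq_latSlice_mul_horSlice_mul_conjTranspose hM hsn hQR hP1 hRvanish
  obtain ⟨C, hSC⟩ := exists_matT_mul_conjTranspose_mul_eq_one hM hP2 hrRt
  obtain ⟨hunit, hX⟩ := isUnit_and_eq_mul_inv_mul_of_outer_inverse
    (conjTranspose_mul_self_matT_latSlice hM hsn hQ2) hSC
    (by rw [Matrix.mul_assoc, ← matT_mprod hM, ← matT_mprod hM, hout])
    (by rw [← hW]; exact hRX) (by rw [← hW]; exact hNX)
  set B := mprod M (horSlice hsn R) (mprod M (mstar M P) (mprod M A (latSlice hsn Q)))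
  have hB : matT M B = S * matT M A * Qt := by
    simp only [B, S, Qt, matT_mprod hM, matT_mstar hM, Matrix.mul_assoc]
  rw [← hB] at hunit hX
  obtain ⟨Y, hY⟩ := exists_matT_eq_inv hM B hunit
  have hdet := (isUnit_iff_isUnit_det _).mp hunit
  refine ⟨Y, matT_injective hM ?_, matT_injective hM ?_, matT_injective hM ?_⟩
  · rw [matT_mprod hM, hY, mul_nonsing_inv _ hdet, matT_idT hM]
  · rw [matT_mprod hM, hY, nonsing_inv_mul _ hdet, matT_idT hM]
  · rw [matT_mprod hM, matT_mprod hM, matT_mprod hM, matT_mstar hM, hY, hX]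
    simp only [Matrix.mul_assoc]

/-- Theorem 3.3 (a)+(b): expression of the outer inverse via the M-QR decomposition of `W`. -/
theorem outer_inverse_MQR {m n p r s : ℕ} (hsn : s ≤ n)
    (M : Matrix (Fin p) (Fin p) ℂ) (hM : IsUnit M.det)
    (A : Tensor m n p) (W : Tensor n m p)
    (P : Tensor m m p) (Q : Tensor n n p) (R : Tensor n m p)
    (hrA : rankM M A = r * p) (hrW : rankM M W = s * p) (hle : s * p ≤ r * p)
    (hQR : mprod M W P = mprod M Q R)
    (hP1 : mprod M P (mstar M P) = idT M m) (hP2 : mprod M (mstar M P) P = idT M m)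
    (hQ1 : mprod M Q (mstar M Q) = idT M n) (hQ2 : mprod M (mstar M Q) Q = idT M n)
    (hrR : rankM M R = s * p)
    (hRvanish : ∀ l (i : Fin n), s ≤ (i : ℕ) → ∀ j, R l i j = 0)
    (hrRt : rankM M (horSlice hsn R) = s * p)
    (X : Tensor n m p)
    (hout : mprod M X (mprod M A X) = X)
    (hRX : rangeM M X = rangeM M W) (hNX : kerM M X = kerM M W) :
    ∃ Y : Tensor s s p,
      mprod M (mprod M (horSlice hsn R) (mprod M (mstar M P) (mprod M A (latSlice hsn Q)))) Y
        = idT M s ∧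
      mprod M Y (mprod M (horSlice hsn R) (mprod M (mstar M P) (mprod M A (latSlice hsn Q))))
        = idT M s ∧
      X = mprod M (latSlice hsn Q) (mprod M Y (mprod M (horSlice hsn R) (mstar M P))) :=
  outer_inverse_MQR_general hsn M hM A W P Q R hQR hP1 hP2 hQ2 hRvanish hrRt X hout hRX hNX
end

section
/- Let A ∈ ℂ^{m×n×p}, let X ∈ ℂ^{n×m×p} be an outer inverse of A (X *_M A *_M X = X), and let Z ∈ ℂ^{n×m×p} satisfy Z *_M A *_M X = Z and X *_M A *_M Z = Z. Set Z' = Z *_M Σ_{k=0}^{18} (I_M − A *_M Z)^k. Then A *_M X − A *_M Z' = (A *_M X − A *_M Z)^{19}, where the power on the right is the 19th M-product power of the tensor A *_M X − A *_M Z ∈ ℂ^{m×m×p}. -/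
open Matrix Finset

section Aux

variable {m n k p : ℕ} {M : Matrix (Fin p) (Fin p) ℂ}

lemma hatT_recover (hM : IsUnit M.det) (A : Tensor m n p) (l : Fin p) :
    ∑ s, M⁻¹ l s • hatT M A s = A l := by
  simp only [hatT, Finset.smul_sum, smul_smul]
  rw [Finset.sum_comm]
  have : ∀ t, ∑ s, (M⁻¹ l s * M s t) • A t = (M⁻¹ * M) l t • A t := by
    intro t; rw [← Finset.sum_smul]; rfl
  simp only [this, Matrix.nonsing_inv_mul M hM]
  simp [Matrix.one_apply]

lemma hatT_inj (hM : IsUnit M.det) : Function.Injective (hatT (m := m) (n := n) M) := by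
  intro A B h
  funext l
  rw [← hatT_recover hM A l, ← hatT_recover hM B l, h]

lemma hatT_mprod (hM : IsUnit M.det) (A : Tensor m n p) (B : Tensor n k p) (l : Fin p) :
    hatT M (mprod M A B) l = hatT M A l * hatT M B l := by
  have e : hatT M (mprod M A B) l
      = ∑ s, M l s • ∑ t, M⁻¹ s t • (hatT M A t * hatT M B t) := rfl
  rw [e]
  simp only [Finset.smul_sum, smul_smul]
  rw [Finset.sum_comm]
  have : ∀ t, ∑ s, (M l s * M⁻¹ s t) • (hatT M A t * hatT M B t)
      = (M * M⁻¹) l t • (hatT M A t * hatT M B t) := by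
    intro t; rw [← Finset.sum_smul]; rfl
  simp only [this, Matrix.mul_nonsing_inv M hM]
  simp [Matrix.one_apply]

lemma hatT_idT (hM : IsUnit M.det) (l : Fin p) :
    hatT M (idT M m) l = 1 := by
  simp only [idT, hatT, Finset.smul_sum, smul_smul]
  rw [Finset.sum_comm]
  have : ∀ t : Fin p, ∑ s, (M l s * M⁻¹ s t) • (1 : Matrix (Fin m) (Fin m) ℂ)
      = (M * M⁻¹) l t • (1 : Matrix (Fin m) (Fin m) ℂ) := by
    intro t; rw [← Finset.sum_smul]; rfl
  simp only [this, Matrix.mul_nonsing_inv M hM]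
  simp [Matrix.one_apply]

lemma hatT_sub (A B : Tensor m n p) (l : Fin p) :
    hatT M (A - B) l = hatT M A l - hatT M B l := by
  simp [hatT, smul_sub, Finset.sum_sub_distrib]

lemma hatT_sum {ι : Type*} (s : Finset ι) (f : ι → Tensor m n p) (l : Fin p) :
    hatT M (∑ i ∈ s, f i) l = ∑ i ∈ s, hatT M (f i) l := by
  simp only [hatT, Finset.sum_apply, Finset.smul_sum]
  rw [Finset.sum_comm]

lemma hatT_mpow (hM : IsUnit M.det) (A : Tensor m m p) (j : ℕ) (l : Fin p) :
    hatT M (mpow M A j) l = (hatT M A l) ^ j := by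
  induction j with
  | zero => simp [mpow, hatT_idT hM]
  | succ j ih => rw [mpow, hatT_mprod hM, ih, pow_succ']

lemma ring_key {R : Type*} [Ring R] (P Q : R) (hP : P * P = P) (hPQ : P * Q = Q)
    (hQP : Q * P = Q) (j : ℕ) :
    (P - Q) ^ (j + 1) = P - Q * ∑ i ∈ Finset.range (j + 1), (1 - Q) ^ i := by
  induction j with
  | zero => simp
  | succ j ih =>
    have hS : ∑ i ∈ Finset.range (j + 1 + 1), (1 - Q) ^ i
        = (1 - Q) * ∑ i ∈ Finset.range (j + 1), (1 - Q) ^ i + 1 := by rw [geom_sum_succ]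
    have h1 : P * (Q * ∑ i ∈ Finset.range (j + 1), (1 - Q) ^ i)
        = Q * ∑ i ∈ Finset.range (j + 1), (1 - Q) ^ i := by
      rw [← mul_assoc, hPQ]
    rw [pow_succ', ih, hS, mul_sub, sub_mul, sub_mul, hP, hQP, h1]
    noncomm_ring

end Aux

/-- One step of the 19th-order hyperpower iteration raises the residual
`Υ = A *_M X − A *_M Z` to the 19th M-product power. -/
theorem hpi19_residual_step {m n p : ℕ}
    (M : Matrix (Fin p) (Fin p) ℂ) (hM : IsUnit M.det)
    (A : Tensor m n p) (X Z : Tensor n m p)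
    (hout : mprod M X (mprod M A X) = X)
    (h1 : mprod M Z (mprod M A X) = Z)
    (h2 : mprod M X (mprod M A Z) = Z) :
    mprod M A X -
        mprod M A
          (mprod M Z (∑ k ∈ Finset.range 19, mpow M (idT M m - mprod M A Z) k)) =
      mpow M (mprod M A X - mprod M A Z) 19 := by
  apply hatT_inj hM
  funext l
  have hx : hatT M X l * (hatT M A l * hatT M X l) = hatT M X l := by
    have := congrFun (congrArg (hatT M) hout) l
    rwa [hatT_mprod hM, hatT_mprod hM] at this
  have hz1 : hatT M Z l * (hatT M A l * hatT M X l) = hatT M Z l := by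
    have := congrFun (congrArg (hatT M) h1) l
    rwa [hatT_mprod hM, hatT_mprod hM] at this
  have hz2 : hatT M X l * (hatT M A l * hatT M Z l) = hatT M Z l := by
    have := congrFun (congrArg (hatT M) h2) l
    rwa [hatT_mprod hM, hatT_mprod hM] at this
  have hP : (hatT M A l * hatT M X l) * (hatT M A l * hatT M X l)
      = hatT M A l * hatT M X l := by rw [Matrix.mul_assoc, hx]
  have hPQ : (hatT M A l * hatT M X l) * (hatT M A l * hatT M Z l)
      = hatT M A l * hatT M Z l := by rw [Matrix.mul_assoc, hz2]
  have hQP : (hatT M A l * hatT M Z l) * (hatT M A l * hatT M X l)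
      = hatT M A l * hatT M Z l := by rw [Matrix.mul_assoc, hz1]
  have hsum : hatT M (∑ k ∈ Finset.range 19, mpow M (idT M m - mprod M A Z) k) l
      = ∑ i ∈ Finset.range 19, (1 - hatT M A l * hatT M Z l) ^ i := by
    rw [hatT_sum]
    refine Finset.sum_congr rfl fun i _ => ?_
    rw [hatT_mpow hM, hatT_sub, hatT_idT hM, hatT_mprod hM]
  rw [hatT_sub, hatT_mprod hM, hatT_mprod hM, hatT_mprod hM, hsum, hatT_mpow hM,
    hatT_sub, hatT_mprod hM, hatT_mprod hM, ← Matrix.mul_assoc]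
  exact (ring_key _ _ hP hPQ hQP 18).symm
end
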